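/- arXiv:1506.08969 — 2 statements merged into one kernel-verified Lean document; each statement's English description precedes it below -/
import Mathlib

section
/- Every infinite group G satisfies cn(G) ≤ w_l(G): if G admits a Hausdorff linear group topology of weight κ, then G satisfies the weak κ⁺-compatibility condition. -/
/-!
Fix a basis `B` of cardinality `κ` and, below each basic neighbourhood of `1`, an open subgroup;
each coset of such a subgroup `H` contains a basic open set, so `G ⧸ H` injects into `B`. For an
index `i`, choose `H` meeting the finite subgroup `F i` trivially and record `H` together with the
cosets `f i x • H`. There are at most `κ ^ |F| = κ` records, so two indices `i < j` among `κ⁺`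
share one: `f i x • H = f j x • H` for all `x`. Then `⟨F i, F j⟩` acts on the cosets
`{f i y • H}`, which `F i ⊓ H = ⊥` identifies with `F`, by left translations of `F`, since both
`f i x` and `f j x` act as translation by `x`; reading off the translation gives `φ`.
-/

open Cardinal TopologicalSpace

universe u

/-- The weight of a topology: the smallest cardinality of a (topological) base. -/
noncomputable def topWeight {X : Type u} (t : TopologicalSpace X) : Cardinal.{u} :=
  sInf {c | ∃ B : Set (Set X), @TopologicalSpace.IsTopologicalBasis X t B ∧ #B = c}

/-- A topology on a group is a linear group topology if it is a group topology having
a neighbourhood base at the identity consisting of open subgroups. -/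
def IsLinearGroupTopology {G : Type u} [Group G] (t : TopologicalSpace G) : Prop :=
  @IsTopologicalGroup G t _ ∧
    ∀ U ∈ @nhds G t 1, ∃ H : Subgroup G, @IsOpen G t (H : Set G) ∧ (H : Set G) ⊆ U

/-- The minimal weight of a Hausdorff linear group topology on `G`. -/
noncomputable def wl (G : Type u) [Group G] : Cardinal.{u} :=
  sInf {c | ∃ t : TopologicalSpace G, IsLinearGroupTopology t ∧ @T2Space G t ∧ topWeight t = c}

/-- A group `G` satisfies the weak `μ`-compatibility condition if for any finite group `F`
and any family of isomorphisms `f i : F ≃* F i` (`i < μ`) onto finite subgroups of `G`,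
there are indices `i < j < μ` and a homomorphism `φ` from the subgroup generated by
`F i ∪ F j` to `F` such that `φ ∘ f i = φ ∘ f j = id`. -/
def WeakCompat (G : Type u) [Group G] (μ : Cardinal.{u}) : Prop :=
  ∀ (F : Type) (_ : Group F) (_ : Finite F)
    (Fs : ∀ o : Ordinal.{u}, o < μ.ord → Subgroup G)
    (f : ∀ o ho, F ≃* Fs o ho),
    ∃ (i j : Ordinal.{u}) (hi : i < μ.ord) (hj : j < μ.ord), i < j ∧
      ∃ φ : (Fs i hi ⊔ Fs j hj : Subgroup G) →* F,
        (∀ x, φ (Subgroup.inclusion le_sup_left (f i hi x)) = x) ∧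
        (∀ x, φ (Subgroup.inclusion le_sup_right (f j hj x)) = x)

/-- The weak compatibility number of `G`: the smallest infinite cardinal `κ` such that `G`
satisfies the weak `κ⁺`-compatibility condition. -/
noncomputable def cn (G : Type u) [Group G] : Cardinal.{u} :=
  sInf {κ | ℵ₀ ≤ κ ∧ WeakCompat G (Order.succ κ)}

universe v

section LeftTranslation

variable {F X : Type*} [Group F]

def leftTranslationSubgroup (G : Type*) [Group G] [MulAction G X] (e : F → X) : Subgroup G where
  carrier := {g | ∃ x : F, ∀ y, g • e y = e (x * y)}
  mul_mem' := by
    rintro g h ⟨x, hx⟩ ⟨x', hx'⟩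
    exact ⟨x * x', fun y => by rw [mul_smul, hx', hx, mul_assoc]⟩
  one_mem' := ⟨1, fun y => by rw [one_smul, one_mul]⟩
  inv_mem' := by
    rintro g ⟨x, hx⟩
    exact ⟨x⁻¹, fun y => by rw [inv_smul_eq_iff, hx, mul_inv_cancel_left]⟩

variable {G : Type*} [Group G] [MulAction G X] {e : F → X}

theorem mem_leftTranslationSubgroup {g : G} (x : F) (h : ∀ y, g • e y = e (x * y)) :
    g ∈ leftTranslationSubgroup G e :=
  ⟨x, h⟩

theorem leftTranslationSubgroup.eq_of_smul_eq (he : Function.Injective e)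
    {g : G} {x x' : F} (h : ∀ y, g • e y = e (x * y)) (h' : ∀ y, g • e y = e (x' * y)) :
    x = x' := by
  simpa using he ((h 1).symm.trans (h' 1))

noncomputable def leftTranslationSubgroup.toHom (he : Function.Injective e) :
    leftTranslationSubgroup G e →* F :=
  MonoidHom.mk' (fun g => g.2.choose) fun g h =>
    leftTranslationSubgroup.eq_of_smul_eq he (g * h).2.choose_spec fun y => by
      rw [Subgroup.coe_mul, mul_smul, h.2.choose_spec, g.2.choose_spec, mul_assoc]

theorem leftTranslationSubgroup.toHom_eq (he : Function.Injective e)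
    {g : leftTranslationSubgroup G e} {x : F} (h : ∀ y, (g : G) • e y = e (x * y)) :
    leftTranslationSubgroup.toHom he g = x :=
  leftTranslationSubgroup.eq_of_smul_eq he g.2.choose_spec h

end LeftTranslation

theorem exists_hom_sup_of_mk_eq {G F : Type*} [Group G] [Group F] {H A B : Subgroup G}
    (fa : F ≃* A) (fb : F ≃* B) (hA : ∀ x, (fa x : G) ∈ H → x = 1)
    (hAB : ∀ x, ((fa x : G) : G ⧸ H) = (fb x : G)) :
    ∃ φ : (A ⊔ B : Subgroup G) →* F,
      (∀ x, φ (Subgroup.inclusion le_sup_left (fa x)) = x) ∧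
      (∀ x, φ (Subgroup.inclusion le_sup_right (fb x)) = x) := by
  set e : F → G ⧸ H := fun y => (fa y : G)
  have he : Function.Injective e := fun y y' h => by
    simpa [inv_mul_eq_one] using hA (y⁻¹ * y') (by simpa using QuotientGroup.eq.mp h)
  have hfa : ∀ x y, (fa x : G) • e y = e (x * y) := fun x y => by simp [e]
  have hfb : ∀ x y, (fb x : G) • e y = e (x * y) := fun x y => by
    simp only [e, hAB, MulAction.Quotient.smul_coe, smul_eq_mul, map_mul, Subgroup.coe_mul]
  have hle : A ⊔ B ≤ leftTranslationSubgroup G e := sup_le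
    (fun a ha => by simpa using mem_leftTranslationSubgroup _ (hfa (fa.symm ⟨a, ha⟩)))
    (fun b hb => by simpa using mem_leftTranslationSubgroup _ (hfb (fb.symm ⟨b, hb⟩)))
  exact ⟨(leftTranslationSubgroup.toHom he).comp (Subgroup.inclusion hle),
    fun x => leftTranslationSubgroup.toHom_eq he (hfa x),
    fun x => leftTranslationSubgroup.toHom_eq he (hfb x)⟩

theorem aleph0_le_mk_of_isTopologicalBasis {X : Type*} [TopologicalSpace X] [T0Space X]
    [Infinite X] {B : Set (Set X)} (hB : IsTopologicalBasis B) : ℵ₀ ≤ #B := by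
  by_contra! hfin
  have : Finite B := Cardinal.lt_aleph0_iff_finite.mp hfin
  have hinj : Function.Injective fun x : X => {s : B | x ∈ (s : Set X)} := fun x y h =>
    hB.eq_iff.mpr fun s hs => Set.ext_iff.mp h ⟨s, hs⟩
  have := Finite.of_injective _ hinj
  exact not_finite X


theorem lift_mk_le_of_isTopologicalBasis_of_continuous {X : Type u} {Y : Type v}
    [TopologicalSpace X] [TopologicalSpace Y] [DiscreteTopology Y] {B : Set (Set X)}
    (hB : IsTopologicalBasis B) {p : X → Y} (hp : Continuous p) (hsurj : Function.Surjective p) :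
    lift.{u} #Y ≤ lift.{v} #B := by
  choose x hx using hsurj
  choose U hUB hxU hUp using fun y =>
    hB.exists_subset_of_mem_open (a := x y) (u := p ⁻¹' {y}) (by simp [hx])
      ((isOpen_discrete _).preimage hp)
  refine lift_mk_le'.mpr ⟨⟨fun y => ⟨U y, hUB y⟩, fun y y' h => ?_⟩⟩
  have hUU : U y = U y' := congrArg Subtype.val h
  have : x y ∈ U y' := hUU ▸ hxU y
  simpa [hx] using hUp y' this

theorem mk_quotient_le_of_isTopologicalBasis {G : Type u} [Group G] [TopologicalSpace G]
    [SeparatelyContinuousMul G] {B : Set (Set G)} (hB : IsTopologicalBasis B) {H : Subgroup G}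
    (hH : IsOpen (H : Set G)) : #(G ⧸ H) ≤ #B := by
  have := QuotientGroup.discreteTopology hH
  simpa using lift_mk_le_of_isTopologicalBasis_of_continuous hB
    (QuotientGroup.continuous_mk (N := H)) QuotientGroup.mk_surjective

theorem exists_openSubgroup_family_of_isTopologicalBasis {G : Type*} [Group G]
    [TopologicalSpace G]
    (hlin : ∀ V ∈ nhds (1 : G), ∃ H : Subgroup G, IsOpen (H : Set G) ∧ (H : Set G) ⊆ V)
    {B : Set (Set G)} (hB : IsTopologicalBasis B) :
    ∃ H : B → Subgroup G, (∀ U, IsOpen (H U : Set G)) ∧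
      ∀ V ∈ nhds (1 : G), ∃ U, (H U : Set G) ⊆ V := by
  have hsub : ∀ U : B, ∃ H : Subgroup G, IsOpen (H : Set G) ∧
      ((1 : G) ∈ (U : Set G) → (H : Set G) ⊆ U) := fun U => by
    by_cases h1 : (1 : G) ∈ (U : Set G)
    · obtain ⟨H, hHo, hHU⟩ := hlin U ((hB.isOpen U.2).mem_nhds h1)
      exact ⟨H, hHo, fun _ => hHU⟩
    · exact ⟨⊤, by simp, fun h => absurd h h1⟩
  choose H hHo hHU using hsub
  refine ⟨H, hHo, fun V hV => ?_⟩
  obtain ⟨K, hKo, hKV⟩ := hlin V hV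
  obtain ⟨U, hUB, h1U, hUK⟩ := hB.exists_subset_of_mem_open K.one_mem hKo
  exact ⟨⟨U, hUB⟩, (hHU ⟨U, hUB⟩ h1U).trans (hUK.trans hKV)⟩

theorem exists_lt_map_eq_of_mk_le {β : Type u} {κ : Cardinal.{u}}
    (f : Set.Iio (Order.succ κ).ord → β) (h : #β ≤ κ) : ∃ i j, i < j ∧ f i = f j := by
  obtain ⟨i, j, hfij, hij⟩ : ∃ i j, f i = f j ∧ i ≠ j := by
    by_contra! hinj
    have := lift_mk_le_lift_mk_of_injective fun i j hfij => hinj i j hfij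
    simp only [mk_Iio_ordinal, card_ord, lift_lift, lift_le] at this
    exact (Order.lt_succ_of_not_isMax (not_isMax κ)).not_ge (this.trans h)
  rcases hij.lt_or_gt with hij | hji
  exacts [⟨i, j, hij, hfij⟩, ⟨j, i, hji, hfij.symm⟩]

theorem mk_prod_arrow_le {α : Type u} {β : Type v} [Finite β] {κ : Cardinal.{u}} (hκ : ℵ₀ ≤ κ)
    (hα : #α ≤ κ) : #(α × (β → α)) ≤ lift.{v} κ := by
  have hκ' : ℵ₀ ≤ lift.{v} κ := by simp [hκ]
  have hβα : #(β → α) ≤ lift.{v} κ := by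
    rw [mk_arrow]
    exact (power_le_power_right (lift_le.mpr hα)).trans
      (pow_le hκ' (by simp))
  rw [mk_prod, lift_umax.{u, v}, lift_id'.{u, v}]
  exact (mul_le_mul' (lift_le.mpr hα) hβα).trans (mul_eq_self hκ').le

theorem weakCompat_succ_of_isTopologicalBasis {G : Type u} [Group G] [TopologicalSpace G]
    [SeparatelyContinuousMul G] [T1Space G]
    (hlin : ∀ V ∈ nhds (1 : G), ∃ H : Subgroup G, IsOpen (H : Set G) ∧ (H : Set G) ⊆ V)
    {B : Set (Set G)} (hB : IsTopologicalBasis B) {κ : Cardinal.{u}} (hκ : ℵ₀ ≤ κ)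
    (hBκ : #B ≤ κ) : WeakCompat G (Order.succ κ) := by
  intro F _ _ Fs f
  obtain ⟨H, hHo, hHnhds⟩ := exists_openSubgroup_family_of_isTopologicalBasis hlin hB
  have e : ∀ U, G ⧸ H U ↪ B := fun U =>
    Classical.choice ((le_def _ _).mp (mk_quotient_le_of_isTopologicalBasis hB (hHo U)))
  have hmeet : ∀ o : Set.Iio (Order.succ κ).ord, ∃ U, ∀ x, (f o o.2 x : G) ∈ H U → x = 1 := by
    rintro ⟨o, ho⟩
    have : Finite (Fs o ho) := Finite.of_equiv F (f o ho).toEquiv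
    obtain ⟨U, hU⟩ := hHnhds ((Fs o ho : Set G) \ {1})ᶜ
      ((Set.toFinite (Fs o ho : Set G)).sdiff.isClosed.isOpen_compl.mem_nhds (by simp))
    exact ⟨U, fun x hx => by simpa using hU hx⟩
  choose V hV using hmeet
  have hcard : #(B × (F → B)) ≤ κ := by simpa using mk_prod_arrow_le (β := F) hκ hBκ
  obtain ⟨⟨i, hi⟩, ⟨j, hj⟩, hij, hVij⟩ :=
    exists_lt_map_eq_of_mk_le (fun o => (V o, fun x => e (V o) (f o o.2 x : G))) hcard
  obtain ⟨hVeq, hfeq⟩ := Prod.ext_iff.mp hVij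
  refine ⟨i, j, hi, hj, hij, exists_hom_sup_of_mk_eq _ _ (hV ⟨i, hi⟩) fun x => (e _).injective ?_⟩
  have hx := congrFun hfeq x
  dsimp only at hx hVeq
  rwa [← hVeq] at hx

theorem exists_isTopologicalBasis_mk_eq_topWeight {X : Type u} (t : TopologicalSpace X) :
    ∃ B : Set (Set X), @IsTopologicalBasis X t B ∧ #B = topWeight t :=
  csInf_mem (s := {c | ∃ B : Set (Set X), @IsTopologicalBasis X t B ∧ #B = c})
    ⟨_, _, @isTopologicalBasis_opens X t, rfl⟩

theorem aleph0_le_topWeight {X : Type u} [t : TopologicalSpace X] [T0Space X] [Infinite X] :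
    ℵ₀ ≤ topWeight t := by
  obtain ⟨B, hB, hBw⟩ := exists_isTopologicalBasis_mk_eq_topWeight t
  exact hBw ▸ aleph0_le_mk_of_isTopologicalBasis hB

theorem IsLinearGroupTopology.weakCompat_succ_topWeight {G : Type u} [Group G] [Infinite G]
    {t : TopologicalSpace G} (ht : IsLinearGroupTopology t) (hT2 : @T2Space G t) :
    WeakCompat G (Order.succ (topWeight t)) := by
  let := t
  have := ht.1
  obtain ⟨B, hB, hBw⟩ := exists_isTopologicalBasis_mk_eq_topWeight t
  exact weakCompat_succ_of_isTopologicalBasis ht.2 hB aleph0_le_topWeight hBw.le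

theorem isLinearGroupTopology_bot {G : Type u} [Group G] :
    IsLinearGroupTopology (⊥ : TopologicalSpace G) := by
  let : TopologicalSpace G := ⊥
  have : DiscreteTopology G := ⟨rfl⟩
  exact ⟨inferInstance, fun U hU => ⟨⊥, isOpen_discrete _, by simpa using mem_of_mem_nhds hU⟩⟩

theorem exists_topology_topWeight_eq_wl (G : Type u) [Group G] :
    ∃ t : TopologicalSpace G, IsLinearGroupTopology t ∧ @T2Space G t ∧ topWeight t = wl G := by
  let : TopologicalSpace G := ⊥
  have : DiscreteTopology G := ⟨rfl⟩
  exact csInf_mem (s := {c | ∃ t : TopologicalSpace G, IsLinearGroupTopology t ∧ @T2Space G t ∧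
    topWeight t = c}) ⟨_, ⊥, isLinearGroupTopology_bot, inferInstance, rfl⟩

/-- Every infinite group `G` satisfies `cn G ≤ wl G`: if `G` admits a Hausdorff linear group
topology of weight `κ`, then `G` satisfies the weak `κ⁺`-compatibility condition. -/
theorem cn_le_wl (G : Type u) [Group G] [Infinite G] :
    cn G ≤ wl G ∧
    ∀ (t : TopologicalSpace G), IsLinearGroupTopology t → @T2Space G t →
      ∀ κ : Cardinal.{u}, topWeight t = κ → WeakCompat G (Order.succ κ) := by
  refine ⟨?_, fun t ht hT2 κ hκ => hκ ▸ ht.weakCompat_succ_topWeight hT2⟩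
  obtain ⟨t, ht, hT2, hw⟩ := exists_topology_topWeight_eq_wl G
  let := t
  exact csInf_le' ⟨hw ▸ aleph0_le_topWeight, hw ▸ ht.weakCompat_succ_topWeight hT2⟩
end

section
/- Let κ be a cardinal and G a group with Alt(κ) ⊆ G ⊆ Sym(κ). For any 6-element subset A ⊆ κ, the subgroup G_A = {g ∈ G : g(a) = a for all a ∈ A} is closed in the restricted Zariski topology Z'_G on G. -/
open Equiv

universe u

/-- The alternating group on an arbitrary type `α`: the subgroup of `Equiv.Perm α`
generated by products of two transpositions. -/
def altGroup (α : Type*) [DecidableEq α] : Subgroup (Equiv.Perm α) :=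
  Subgroup.closure {σ | ∃ τ₁ τ₂ : Equiv.Perm α, τ₁.IsSwap ∧ τ₂.IsSwap ∧ σ = τ₁ * τ₂}


/-- The restricted Zariski topology on a group `G`, generated by the subbase of sets
`G \ {a}`, `{x : x * b * x⁻¹ ≠ a * b * a⁻¹}` and `{x : (x*c*x⁻¹) * b * (x*c*x⁻¹)⁻¹ ≠ b}`
for `a, b, c ∈ G` with `b² = c² = 1`. -/
def restrictedZariski (G : Type u) [Group G] : TopologicalSpace G :=
  TopologicalSpace.generateFrom
    ({U | ∃ a : G, U = {a}ᶜ} ∪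
     {U | ∃ a b : G, b ^ 2 = 1 ∧ U = {x | x * b * x⁻¹ ≠ a * b * a⁻¹}} ∪
     {U | ∃ b c : G, b ^ 2 = 1 ∧ c ^ 2 = 1 ∧
        U = {x | (x * c * x⁻¹) * b * (x * c * x⁻¹)⁻¹ ≠ b}})

/-!
For an involution `σ`, the centralizer `{g | g σ = σ g}` is closed in the restricted Zariski
topology: its complement is a subbasic open set. The stabilizer `G_A` is the intersection of
these centralizers over the involutions of `G` supported in `A`. An element fixing `A` pointwise
is disjoint from such a `σ`, hence commutes with it. Conversely, if `g a ≠ a` for some `a ∈ A`,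
since `|A| ≥ 5` there are `p, q, r ∈ A` distinct from `a` and `g a`; the double transposition
`(a p)(q r)` lies in `Alt(α)`, moves `a`, and so would have to move `g a` if `g` commuted with it.
-/

lemma isClosed_setOf_commute {G : Type u} [Group G] {b : G} (hb : b ^ 2 = 1) :
    @IsClosed G (restrictedZariski G) {x : G | Commute x b} := by
  let _ : TopologicalSpace G := restrictedZariski G
  refine ⟨TopologicalSpace.GenerateOpen.basic _ (Or.inl (Or.inr ⟨b, b, hb, ?_⟩))⟩
  ext x
  simp [Commute, SemiconjBy, ← mul_inv_eq_iff_eq_mul]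

lemma Set.exists_triple_subset_diff_pair {α : Type*} {A : Set α} (hA : 5 ≤ A.encard) (a b : α) :
    ∃ p q r : α, [p, q, r].Nodup ∧ {p, q, r} ⊆ A \ {a, b} := by
  have hpair : ({a, b} : Set α).encard ≤ 2 :=
    (Set.encard_insert_le _ _).trans (by rw [Set.encard_singleton]; rfl)
  have h3 : 3 ≤ (A \ {a, b}).encard :=
    calc (3 : ℕ∞) = 5 - 2 := rfl
      _ ≤ A.encard - ({a, b} : Set α).encard := tsub_le_tsub hA hpair
      _ ≤ (A \ {a, b}).encard := Set.tsub_encard_le_encard_sdiff _ _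
  obtain ⟨t, hts, ht⟩ := Set.exists_subset_encard_eq h3
  obtain ⟨p, q, r, hpq, hpr, hqr, rfl⟩ := Set.encard_eq_three.mp ht
  exact ⟨p, q, r, by simp [hpq, hpr, hqr], hts⟩

namespace Equiv.Perm

variable {α : Type*}

lemma apply_ne_self_of_commute {g σ : Perm α} (hcomm : Commute g σ) {a : α} (ha : σ a ≠ a) :
    σ (g a) ≠ g a := by
  rw [← mul_apply, ← hcomm.eq, mul_apply, g.injective.ne_iff]
  exact ha

variable [DecidableEq α]

lemma swap_mul_swap_mem_altGroup {a b c d : α} (hab : a ≠ b) (hcd : c ≠ d) :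
    swap a b * swap c d ∈ altGroup α :=
  Subgroup.subset_closure ⟨_, _, ⟨a, b, hab, rfl⟩, ⟨c, d, hcd, rfl⟩, rfl⟩

lemma swap_mul_swap_sq {a b c d : α} (h : [a, b, c, d].Nodup) :
    (swap a b * swap c d) ^ 2 = 1 := by
  rw [(disjoint_swap_swap h).commute.mul_pow, sq, sq, swap_mul_self, swap_mul_self,
    one_mul]

lemma swap_mul_swap_apply_left {a b c d : α} (h : [a, b, c, d].Nodup) :
    (swap a b * swap c d) a = b := by
  simp_all [swap_apply_of_ne_of_ne]

lemma set_support_swap_mul_swap_subset (a b c d : α) :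
    {x | (swap a b * swap c d) x ≠ x} ⊆ {a, b, c, d} := by
  intro x hx
  by_contra hnot
  simp only [Set.mem_insert_iff, Set.mem_singleton_iff, not_or] at hnot
  simp_all [swap_apply_of_ne_of_ne]

lemma apply_eq_self_of_forall_commute {A : Set α} (hA : 5 ≤ A.encard) {g : Perm α}
    (hg : ∀ σ ∈ altGroup α, σ ^ 2 = 1 → {x | σ x ≠ x} ⊆ A → Commute g σ) {a : α} (ha : a ∈ A) :
    g a = a := by
  by_contra hne
  obtain ⟨p, q, r, hpqr, hsub⟩ := Set.exists_triple_subset_diff_pair hA a (g a)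
  simp only [Set.insert_subset_iff, Set.singleton_subset_iff, Set.mem_sdiff, Set.mem_insert_iff,
    Set.mem_singleton_iff, not_or] at hsub
  obtain ⟨⟨hpA, hpa, hpg⟩, ⟨hqA, hqa, hqg⟩, ⟨hrA, hra, hrg⟩⟩ := hsub
  have hnodup : [a, p, q, r].Nodup := by simp_all [eq_comm]
  have hsupp : {x | (swap a p * swap q r) x ≠ x} ⊆ A :=
    (set_support_swap_mul_swap_subset a p q r).trans (by simp [Set.insert_subset_iff, *])
  have hcomm := hg _ (swap_mul_swap_mem_altGroup (Ne.symm hpa) (by simp_all))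
    (swap_mul_swap_sq hnodup) hsupp
  have hmoved := apply_ne_self_of_commute hcomm (by rwa [swap_mul_swap_apply_left hnodup])
  rcases set_support_swap_mul_swap_subset a p q r hmoved with h | h | h | h
  exacts [hne h, hpg h.symm, hqg h.symm, hrg h.symm]

end Equiv.Perm

/-- For a group `G` with `Alt(α) ⊆ G ⊆ Sym(α)` and any 6-element subset `A ⊆ α`, the
pointwise stabilizer `G_A = {g ∈ G : g a = a for all a ∈ A}` is closed in the restricted
Zariski topology on `G`. -/
theorem fixing_subgroup_zariski_closed (α : Type u) [DecidableEq α]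
    (G : Subgroup (Equiv.Perm α)) (hG : altGroup α ≤ G)
    (A : Set α) (hA : A.encard = 6) :
    @IsClosed G (restrictedZariski G) {g : G | ∀ a ∈ A, (g : Equiv.Perm α) a = a} := by
  let _ : TopologicalSpace G := restrictedZariski G
  have hstab : {g : G | ∀ a ∈ A, (g : Equiv.Perm α) a = a} =
      ⋂ σ ∈ {σ : G | σ ^ 2 = 1 ∧ {x | (σ : Perm α) x ≠ x} ⊆ A}, {g : G | Commute g σ} := by
    ext g
    simp only [Set.mem_ofPred_eq, Set.mem_iInter, Commute, SemiconjBy, Subtype.ext_iff,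
      Subgroup.coe_mul]
    constructor
    · intro hg σ ⟨_, hσA⟩
      refine Perm.Disjoint.commute fun x => (em (x ∈ A)).imp (hg x) fun hx => ?_
      exact not_not.mp fun hmoved => hx (hσA hmoved)
    · intro hg a ha
      refine Perm.apply_eq_self_of_forall_commute (hA ▸ by norm_num) (fun σ hσ hσ2 hσA => ?_) ha
      exact hg ⟨σ, hG hσ⟩ ⟨by simpa using hσ2, hσA⟩
  rw [hstab]
  exact isClosed_biInter fun σ hσ => isClosed_setOf_commute hσ.1
end
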